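/- arXiv:1809.05609 — 2 statements merged into one kernel-verified Lean document; each statement's English description precedes it below -/
import Mathlib

section
/- For the function f(p,q) = ⟨p,q⟩ on S^n × S^n with the product metric g_0 + δ g_0, the squared norm of the gradient satisfies |∇f|² = (1 + 1/δ)(1 - f²). In particular f is an isoparametric function whose only critical values are -1 and 1. -/
open scoped Real

/-! At a unit vector `p`, the degree-zero extension of `x ↦ ⟪x, q⟫` has Euclidean gradient
`q - ⟪p, q⟫ p`, the tangential projection of `q`, whose squared length is `1 - ⟪p, q⟫²`.
By symmetry the same holds in the second factor, and the weight `δ⁻¹` of the product metric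
on that factor produces `(1 + 1/δ)(1 - f²)`. So `∇f` vanishes only where `f² = 1`. -/

/-- The spherical gradient of `u` at a point `x` of the unit sphere: the gradient
(for the round metric of curvature 1) computed as the Euclidean gradient of the
degree-zero homogeneous extension of `u`. -/
noncomputable def sphGrad {m : ℕ} (u : EuclideanSpace ℝ (Fin m) → ℝ)
    (x : EuclideanSpace ℝ (Fin m)) : EuclideanSpace ℝ (Fin m) :=
  gradient (fun y => u (‖y‖⁻¹ • y)) x

open scoped RealInnerProductSpace

section InnerProductSpace

variable {F : Type*} [NormedAddCommGroup F] [InnerProductSpace ℝ F]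

theorem hasFDerivAt_norm_of_ne_zero {x : F} (hx : x ≠ 0) :
    HasFDerivAt (fun y : F => ‖y‖) (‖x‖⁻¹ • innerSL ℝ x) x := by
  have hsqrt := (hasStrictFDerivAt_norm_sq x).hasFDerivAt.sqrt (by simpa using hx)
  simp only [Real.sqrt_sq (norm_nonneg _)] at hsqrt
  convert hsqrt using 1
  ext v
  simp only [smul_apply, coe_innerSL_apply, smul_eq_mul, one_div, mul_inv_rev, nsmul_eq_mul,
    Nat.cast_ofNat]
  field_simp

theorem hasFDerivAt_norm_inv {x : F} (hx : x ≠ 0) :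
    HasFDerivAt (fun y : F => ‖y‖⁻¹) (-(‖x‖ ^ 3)⁻¹ • innerSL ℝ x) x := by
  refine ((hasDerivAt_inv (norm_ne_zero_iff.2 hx)).comp_hasFDerivAt x
    (hasFDerivAt_norm_of_ne_zero hx)).congr_fderiv ?_
  rw [smul_smul, neg_mul, ← mul_inv, ← pow_succ]

theorem norm_sub_inner_smul_sq {p : F} (hp : ‖p‖ = 1) (q : F) :
    ‖q - ⟪p, q⟫ • p‖ ^ 2 = ‖q‖ ^ 2 - ⟪p, q⟫ ^ 2 := by
  rw [norm_sub_sq_real, norm_smul, real_inner_smul_right, hp, real_inner_comm,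
    Real.norm_eq_abs, mul_one, sq_abs]
  ring

variable [CompleteSpace F]

theorem hasGradientAt_inner_normalize {p : F} (hp : ‖p‖ = 1) (q : F) :
    HasGradientAt (fun y => ⟪‖y‖⁻¹ • y, q⟫) (q - ⟪p, q⟫ • p) p := by
  have hp0 : p ≠ 0 := norm_ne_zero_iff.1 (by simp [hp])
  have hfun : (fun y : F => ⟪‖y‖⁻¹ • y, q⟫) = fun y => ‖y‖⁻¹ * innerSL ℝ q y := by
    funext y
    rw [real_inner_smul_left, innerSL_apply_apply, real_inner_comm]
  rw [hasGradientAt_iff_hasFDerivAt, hfun]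
  refine ((hasFDerivAt_norm_inv hp0).fun_mul (innerSL ℝ q).hasFDerivAt).congr_fderiv ?_
  ext v
  simp only [hp, inv_one, one_smul, coe_innerSL_apply, one_pow, neg_smul, smul_neg, add_apply,
    neg_apply, smul_apply, smul_eq_mul, map_sub, map_smul, sub_apply,
    InnerProductSpace.toDual_apply_apply]
  rw [real_inner_comm q p]
  ring

end InnerProductSpace

theorem sphGrad_inner_left {m : ℕ} {p : EuclideanSpace ℝ (Fin m)} (hp : ‖p‖ = 1)
    (q : EuclideanSpace ℝ (Fin m)) :
    sphGrad (fun x => ⟪x, q⟫) p = q - ⟪p, q⟫ • p :=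
  (hasGradientAt_inner_normalize hp q).gradient

theorem sphGrad_inner_right {m : ℕ} {q : EuclideanSpace ℝ (Fin m)} (hq : ‖q‖ = 1)
    (p : EuclideanSpace ℝ (Fin m)) :
    sphGrad (fun y => ⟪p, y⟫) q = p - ⟪p, q⟫ • q := by
  have hswap : (fun y => ⟪p, y⟫) = fun y => ⟪y, p⟫ := funext fun y => real_inner_comm y p
  rw [hswap, sphGrad_inner_left hq, real_inner_comm]

theorem grad_inner_product_spheres_general (n : ℕ) (δ : ℝ)
    (p q : EuclideanSpace ℝ (Fin (n + 1)))
    (hp : p ∈ Metric.sphere (0 : EuclideanSpace ℝ (Fin (n + 1))) 1)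
    (hq : q ∈ Metric.sphere (0 : EuclideanSpace ℝ (Fin (n + 1))) 1) :
    ‖sphGrad (fun x => (inner ℝ x q : ℝ)) p‖ ^ 2
        + δ⁻¹ * ‖sphGrad (fun y => (inner ℝ p y : ℝ)) q‖ ^ 2
      = (1 + 1 / δ) * (1 - (inner ℝ p q : ℝ) ^ 2) ∧
    ((sphGrad (fun x => (inner ℝ x q : ℝ)) p = 0 ∧
        sphGrad (fun y => (inner ℝ p y : ℝ)) q = 0) →
      (inner ℝ p q : ℝ) = 1 ∨ (inner ℝ p q : ℝ) = -1) := by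
  rw [mem_sphere_zero_iff_norm] at hp hq
  have hgrad_p : ‖sphGrad (fun x => ⟪x, q⟫) p‖ ^ 2 = 1 - ⟪p, q⟫ ^ 2 := by
    rw [sphGrad_inner_left hp, norm_sub_inner_smul_sq hp, hq, one_pow]
  have hgrad_q : ‖sphGrad (fun y => ⟪p, y⟫) q‖ ^ 2 = 1 - ⟪p, q⟫ ^ 2 := by
    rw [sphGrad_inner_right hq, real_inner_comm, norm_sub_inner_smul_sq hq, hp, one_pow]
  refine ⟨by rw [hgrad_p, hgrad_q]; ring, fun ⟨hcrit, _⟩ => ?_⟩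
  rw [hcrit, norm_zero, eq_comm, zero_pow two_ne_zero, sub_eq_zero, eq_comm] at hgrad_p
  exact sq_eq_one_iff.1 hgrad_p

/-- for `f(p,q) = ⟨p,q⟩` on `(S^n × S^n, g₀ + δ g₀)` (the squared
gradient norm for the product metric being `|∇₁f|² + δ⁻¹|∇₂f|²`), one has
`|∇f|² = (1 + 1/δ)(1 - f²)`; in particular the only critical values of the
isoparametric function `f` are `-1` and `1`. -/
theorem grad_inner_product_spheres (n : ℕ) (hn : 2 ≤ n) (δ : ℝ) (hδ : 0 < δ)
    (p q : EuclideanSpace ℝ (Fin (n + 1)))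
    (hp : p ∈ Metric.sphere (0 : EuclideanSpace ℝ (Fin (n + 1))) 1)
    (hq : q ∈ Metric.sphere (0 : EuclideanSpace ℝ (Fin (n + 1))) 1) :
    ‖sphGrad (fun x => (inner ℝ x q : ℝ)) p‖ ^ 2
        + δ⁻¹ * ‖sphGrad (fun y => (inner ℝ p y : ℝ)) q‖ ^ 2
      = (1 + 1 / δ) * (1 - (inner ℝ p q : ℝ) ^ 2) ∧
    ((sphGrad (fun x => (inner ℝ x q : ℝ)) p = 0 ∧
        sphGrad (fun y => (inner ℝ p y : ℝ)) q = 0) →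
      (inner ℝ p q : ℝ) = 1 ∨ (inner ℝ p q : ℝ) = -1) :=
  grad_inner_product_spheres_general n δ p q hp hq
end

section
/- Let k ≥ 1 and λ_k = (k(k+n-1)/(p-2))(1+1/δ). The kernel of the linearized operator L_k(v) = -Δv - λ_k(p-2)v on invariant functions on (S^n × S^n, g_0 + δ g_0) is one-dimensional, spanned by w_{β_k} ∘ arccos ∘ f with β_k = k(n+k-1). Moreover (p-2)w_{β_k} does not lie in the range of L_k, where the range is {y : ∫₀^π y w_{β_k} dr = 0} (orthogonality with respect to the measure induced on [0,π]). -/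
open scoped Real
open Set Filter Topology MeasureTheory

/-!
If `w` and `w_k` both solve the zonal equation with `w'(0) = 0`, then `v = w - w(0) w_k` solves it
with zero Cauchy data at the pole `r = 0`. Although `cot r` blows up there, in the derivative of
the energy `v² + v'²` the singular term `-2(n-1) cot r v'²` is bounded above by
`2(n-1)|cot b| v'²` on `(0, b]` for every `b < π`, so Grönwall forces the energy to vanish on
`[0, π)`. For transversality, the integral is `(p - 2) ∫ w_k² sin^{n-1} r dr`, and `w_k(0) = 1`
makes the second factor positive.
-/

lemma cos_div_sin_antitoneOn : AntitoneOn (fun r => Real.cos r / Real.sin r) (Ioo 0 π) := by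
  intro r hr b hb hrb
  rw [div_le_div_iff₀ (Real.sin_pos_of_pos_of_lt_pi hb.1 hb.2)
    (Real.sin_pos_of_pos_of_lt_pi hr.1 hr.2)]
  have h := Real.sin_nonneg_of_nonneg_of_le_pi (x := b - r) (by linarith)
    (by linarith [hr.1, hb.2])
  rw [Real.sin_sub] at h
  linarith

/-- The derivative is only required on the open interval, so that the lemma applies up to a
singular endpoint. -/
lemma nonpos_of_hasDerivAt_le_mul {f f' : ℝ → ℝ} {a b K : ℝ} (hf : ContinuousOn f (Icc a b))
    (hderiv : ∀ x ∈ Ioo a b, HasDerivAt f (f' x) x) (hbound : ∀ x ∈ Ioo a b, f' x ≤ K * f x)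
    (ha : f a ≤ 0) : ∀ x ∈ Icc a b, f x ≤ 0 := by
  intro x hx
  have hanti : AntitoneOn (fun x => Real.exp (-K * x) * f x) (Icc a b) := by
    refine antitoneOn_of_hasDerivWithinAt_nonpos (convex_Icc a b)
      ((Real.continuous_exp.comp (continuous_const.mul continuous_id)).continuousOn.mul hf)
      (f' := fun x => Real.exp (-K * x) * (f' x - K * f x)) (fun y hy => ?_) (fun y hy => ?_)
    · rw [interior_Icc] at hy
      have he : HasDerivAt (fun x => Real.exp (-K * x)) (Real.exp (-K * y) * -K) y := by
        simpa using ((hasDerivAt_id y).const_mul (-K)).exp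
      exact ((he.mul (hderiv y hy)).congr_deriv (by ring)).hasDerivWithinAt
    · rw [interior_Icc] at hy
      exact mul_nonpos_of_nonneg_of_nonpos (Real.exp_pos _).le (by linarith [hbound y hy])
  have hxa : Real.exp (-K * x) * f x ≤ 0 :=
    (hanti (left_mem_Icc.2 (hx.1.trans hx.2)) hx hx.1).trans
      (mul_nonpos_of_nonneg_of_nonpos (Real.exp_pos _).le ha)
  exact nonpos_of_mul_nonpos_right hxa (Real.exp_pos _)

/-- The zonal eigenvalue equation on `S^{m+1}`, in the geodesic distance `r` from a pole. -/
def SolvesZonalODE (m β : ℝ) (v v' v'' : ℝ → ℝ) : Prop :=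
  (∀ r ∈ Icc (0:ℝ) π, HasDerivAt v (v' r) r) ∧
    (∀ r ∈ Icc (0:ℝ) π, HasDerivAt v' (v'' r) r) ∧
    ∀ r ∈ Ioo (0:ℝ) π, v'' r + m * (Real.cos r / Real.sin r) * v' r + β * v r = 0

namespace SolvesZonalODE

variable {m β : ℝ} {v v' v'' : ℝ → ℝ}

lemma sub_const_mul {u u' u'' : ℝ → ℝ} (hv : SolvesZonalODE m β v v' v'')
    (hu : SolvesZonalODE m β u u' u'') (c : ℝ) :
    SolvesZonalODE m β (fun r => v r - c * u r) (fun r => v' r - c * u' r)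
      (fun r => v'' r - c * u'' r) :=
  ⟨fun r hr => (hv.1 r hr).sub ((hu.1 r hr).const_mul c),
    fun r hr => (hv.2.1 r hr).sub ((hu.2.1 r hr).const_mul c),
    fun r hr => by linear_combination hv.2.2 r hr - c * hu.2.2 r hr⟩

lemma continuousOn (hv : SolvesZonalODE m β v v' v'') : ContinuousOn v (Icc 0 π) :=
  fun r hr => (hv.1 r hr).continuousAt.continuousWithinAt

lemma continuousOn_deriv (hv : SolvesZonalODE m β v v' v'') : ContinuousOn v' (Icc 0 π) :=
  fun r hr => (hv.2.1 r hr).continuousAt.continuousWithinAt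

lemma energy_deriv_le (hv : SolvesZonalODE m β v v' v'') (hm : 0 ≤ m) {b r : ℝ}
    (hb : b < π) (hr : r ∈ Ioc 0 b) :
    2 * v r * v' r + 2 * v' r * v'' r ≤
      (|1 - β| + 2 * m * |Real.cos b / Real.sin b|) * (v r ^ 2 + v' r ^ 2) := by
  have hrπ : r ∈ Ioo 0 π := ⟨hr.1, hr.2.trans_lt hb⟩
  have hcot : -(Real.cos r / Real.sin r) ≤ |Real.cos b / Real.sin b| :=
    (neg_le_neg (cos_div_sin_antitoneOn hrπ ⟨hr.1.trans_le hr.2, hb⟩ hr.2)).trans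
      (neg_le_abs _)
  have hcross : 2 * (1 - β) * (v r * v' r) ≤ |1 - β| * (v r ^ 2 + v' r ^ 2) := by
    have hpos := two_mul_le_add_sq (v r) (v' r)
    have hneg := two_mul_le_add_sq (-v r) (v' r)
    rcases abs_cases (1 - β) with ⟨habs, hs⟩ | ⟨habs, hs⟩ <;> rw [habs]
    · nlinarith [mul_le_mul_of_nonneg_left hpos hs]
    · nlinarith [mul_le_mul_of_nonneg_left hneg (neg_nonneg.2 hs.le)]
  have hode : v'' r = -(m * (Real.cos r / Real.sin r) * v' r) - β * v r := by
    linear_combination hv.2.2 r hrπ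
  rw [hode]
  nlinarith [mul_le_mul_of_nonneg_left hcot (mul_nonneg hm (sq_nonneg (v' r))),
    mul_nonneg hm (sq_nonneg (v r)), abs_nonneg (Real.cos b / Real.sin b)]

lemma eqOn_zero (hv : SolvesZonalODE m β v v' v'') (hm : 0 ≤ m) (h0 : v 0 = 0) (h0' : v' 0 = 0) :
    EqOn v 0 (Icc 0 π) := by
  have hIoo : EqOn v 0 (Ioo 0 π) := by
    intro b hb
    have hsub : Icc 0 b ⊆ Icc 0 π := Icc_subset_Icc_right hb.2.le
    have hE := nonpos_of_hasDerivAt_le_mul (f := fun r => v r ^ 2 + v' r ^ 2)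
      (((hv.continuousOn.mono hsub).pow 2).add ((hv.continuousOn_deriv.mono hsub).pow 2))
      (fun r hr => (((hv.1 r (hsub (Ioo_subset_Icc_self hr))).pow 2).add
        ((hv.2.1 r (hsub (Ioo_subset_Icc_self hr))).pow 2)).congr_deriv (by push_cast; ring))
      (fun r hr => hv.energy_deriv_le hm hb.2 ⟨hr.1, hr.2.le⟩) (by simp [h0, h0'])
      b (right_mem_Icc.2 hb.1.le)
    exact pow_eq_zero_iff two_ne_zero |>.1
      (le_antisymm (by nlinarith [sq_nonneg (v' b)]) (sq_nonneg _))
  exact hIoo.of_subset_closure hv.continuousOn continuousOn_const Ioo_subset_Icc_self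
    (closure_Ioo Real.pi_pos.ne).symm.subset

end SolvesZonalODE

lemma exists_mem_Ioo_ne_zero_of_continuousWithinAt {w : ℝ → ℝ} {b : ℝ} (hb : 0 < b)
    (hw : ContinuousWithinAt w (Icc 0 b) 0) (hw0 : w 0 ≠ 0) : ∃ c ∈ Ioo 0 b, w c ≠ 0 := by
  rw [continuousWithinAt_Icc_iff_Ici hb, ← continuousWithinAt_Ioi_iff_Ici] at hw
  exact ((eventually_mem_set.2 (Ioo_mem_nhdsGT hb)).and (hw.eventually_ne hw0)).exists

lemma integral_sq_mul_sin_pow_pos {w : ℝ → ℝ} (hw : ContinuousOn w (Icc 0 π)) (hw0 : w 0 ≠ 0)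
    (j : ℕ) : 0 < ∫ r in Ioo 0 π, w r ^ 2 * Real.sin r ^ j := by
  obtain ⟨c, hc, hwc⟩ :=
    exists_mem_Ioo_ne_zero_of_continuousWithinAt Real.pi_pos
      (hw 0 ⟨le_rfl, Real.pi_pos.le⟩) hw0
  rw [← integral_Ioc_eq_integral_Ioo, ← intervalIntegral.integral_of_le Real.pi_pos.le]
  refine intervalIntegral.integral_pos Real.pi_pos
    ((hw.pow 2).mul (Real.continuous_sin.continuousOn.pow j)) (fun r hr => ?_)
    ⟨c, Ioo_subset_Icc_self hc, ?_⟩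
  · have := Real.sin_nonneg_of_nonneg_of_le_pi hr.1.le hr.2
    positivity
  · have := Real.sin_pos_of_pos_of_lt_pi hc.1 hc.2
    positivity

theorem kernel_one_dimensional_and_transversality_general
    (n k : ℕ) (hn : 2 ≤ n) (p : ℝ)
    (hp : p ∈ Ioo (2:ℝ) ((4 * n : ℝ) / (2 * n - 2)))
    (wk wk' wk'' : ℝ → ℝ)
    (hd1 : ∀ r ∈ Icc (0:ℝ) π, HasDerivAt wk (wk' r) r)
    (hd2 : ∀ r ∈ Icc (0:ℝ) π, HasDerivAt wk' (wk'' r) r)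
    (hode : ∀ r ∈ Ioo (0:ℝ) π,
      wk'' r + ((n : ℝ) - 1) * (Real.cos r / Real.sin r) * wk' r
        + ((k : ℝ) * ((n : ℝ) + (k : ℝ) - 1)) * wk r = 0)
    (h0 : wk 0 = 1) (h0' : wk' 0 = 0) :
    (∀ w w' w'' : ℝ → ℝ,
      (∀ r ∈ Icc (0:ℝ) π, HasDerivAt w (w' r) r) →
      (∀ r ∈ Icc (0:ℝ) π, HasDerivAt w' (w'' r) r) →
      ContinuousOn w'' (Icc (0:ℝ) π) →
      (∀ r ∈ Ioo (0:ℝ) π,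
        w'' r + ((n : ℝ) - 1) * (Real.cos r / Real.sin r) * w' r
          + ((k : ℝ) * ((n : ℝ) + (k : ℝ) - 1)) * w r = 0) →
      w' 0 = 0 → w' π = 0 →
      ∃ c : ℝ, ∀ r ∈ Icc (0:ℝ) π, w r = c * wk r) ∧
    (∫ r in Ioo (0:ℝ) π, ((p - 2) * wk r) * wk r * Real.sin r ^ (n - 1)) ≠ 0 := by
  have hm : (0:ℝ) ≤ n - 1 := by
    have : (2:ℝ) ≤ n := by exact_mod_cast hn
    linarith
  have hwk : SolvesZonalODE (n - 1) (k * (n + k - 1)) wk wk' wk'' := ⟨hd1, hd2, hode⟩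
  refine ⟨fun w w' w'' hw1 hw2 _ hwode hw0' _ => ⟨w 0, fun r hr => ?_⟩, ?_⟩
  · have hdiff := (SolvesZonalODE.sub_const_mul ⟨hw1, hw2, hwode⟩ hwk (w 0)).eqOn_zero hm
      (by simp [h0]) (by simp [hw0', h0']) hr
    exact sub_eq_zero.1 hdiff
  · have hpos := integral_sq_mul_sin_pow_pos hwk.continuousOn (h0 ▸ one_ne_zero) (n - 1)
    have hintegrand : (fun r => (p - 2) * wk r * wk r * Real.sin r ^ (n - 1))
        = fun r => (p - 2) * (wk r ^ 2 * Real.sin r ^ (n - 1)) := by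
      ext r; ring
    rw [hintegrand, integral_const_mul]
    exact mul_ne_zero (sub_ne_zero.2 hp.1.ne') hpos.ne'

/-- the kernel of the linearized operator
`L_k(v) = -Δv - λ_k(p-2)v` on invariant functions, identified with functions `w`
on `[0,π]` with `w'(0) = w'(π) = 0` solving
`w'' + (n-1)(cos r/sin r)w' + k(n+k-1)w = 0`, is one-dimensional, spanned by
`w_{β_k}`; and `(p-2)w_{β_k}` is not in the range of `L_k`, i.e. it is not
orthogonal to `w_{β_k}` for the induced measure `sin^{n-1} r dr` on `[0,π]`. -/
theorem kernel_one_dimensional_and_transversality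
    (n k : ℕ) (hn : 2 ≤ n) (hk : 1 ≤ k) (δ p : ℝ) (hδ : 0 < δ)
    (hp : p ∈ Ioo (2:ℝ) ((4 * n : ℝ) / (2 * n - 2)))
    (wk wk' wk'' : ℝ → ℝ)
    (hd1 : ∀ r ∈ Icc (0:ℝ) π, HasDerivAt wk (wk' r) r)
    (hd2 : ∀ r ∈ Icc (0:ℝ) π, HasDerivAt wk' (wk'' r) r)
    (hc : ContinuousOn wk'' (Icc (0:ℝ) π))
    (hode : ∀ r ∈ Ioo (0:ℝ) π,
      wk'' r + ((n : ℝ) - 1) * (Real.cos r / Real.sin r) * wk' r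
        + ((k : ℝ) * ((n : ℝ) + (k : ℝ) - 1)) * wk r = 0)
    (h0 : wk 0 = 1) (h0' : wk' 0 = 0) (hπ' : wk' π = 0) :
    (∀ w w' w'' : ℝ → ℝ,
      (∀ r ∈ Icc (0:ℝ) π, HasDerivAt w (w' r) r) →
      (∀ r ∈ Icc (0:ℝ) π, HasDerivAt w' (w'' r) r) →
      ContinuousOn w'' (Icc (0:ℝ) π) →
      (∀ r ∈ Ioo (0:ℝ) π,
        w'' r + ((n : ℝ) - 1) * (Real.cos r / Real.sin r) * w' r
          + ((k : ℝ) * ((n : ℝ) + (k : ℝ) - 1)) * w r = 0) →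
      w' 0 = 0 → w' π = 0 →
      ∃ c : ℝ, ∀ r ∈ Icc (0:ℝ) π, w r = c * wk r) ∧
    (∫ r in Ioo (0:ℝ) π, ((p - 2) * wk r) * wk r * Real.sin r ^ (n - 1)) ≠ 0 :=
  kernel_one_dimensional_and_transversality_general n k hn p hp wk wk' wk'' hd1 hd2 hode h0 h0'
end
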